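/- arXiv:1908.08324 — 2 statements merged into one kernel-verified Lean document; each statement's English description precedes it below -/
import Mathlib

section
/- Let H be a simply connected combinatorial strata structure endowed with a datum (N, {P_J}) of nodal strata, with nodal separating blocks enumerated B₁, …, B_n and maps Φ_m as defined. Then for every m with 0 ≤ m < n, there exists an element δ^m ∈ Δ_m such that for every J = {i₁, i₂} ∈ B_{m+1}, both {i₁} and {i₂} belong to Φ_m^{-1}(δ^m). -/
/-- A combinatorial strata structure with minimal set of indices the (finite) type `I`:
an open subset of `𝒫(I)` (i.e. a family closed under taking subsets) containing all
singletons. -/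
def IsCSS {I : Type*} (H : Set (Finset I)) : Prop :=
  (∀ J ∈ H, ∀ J' : Finset I, J' ⊆ J → J' ∈ H) ∧ ∀ i : I, ({i} : Finset I) ∈ H

/-- `level H k` is `H(k)`, the set of strata of `H` with exactly `k` elements. -/
def level {I : Type*} (H : Set (Finset I)) (k : ℕ) : Set (Finset I) :=
  {J ∈ H | J.card = k}

/-- A `k`-path in `H`: a nonempty sequence of strata of `H(k)` such that the union of
any two consecutive entries lies in `H(k+1)`. -/
def IsKPath {I : Type*} [DecidableEq I] (H : Set (Finset I)) (k : ℕ)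
    (γ : List (Finset I)) : Prop :=
  γ ≠ [] ∧ (∀ J ∈ γ, J ∈ level H k) ∧
    γ.Chain' fun J J' => (J ∪ J') ∈ level H (k + 1)

/-- The path `γ` joins `J` and `J'`. -/
def Joins {I : Type*} (γ : List (Finset I)) (J J' : Finset I) : Prop :=
  γ.head? = some J ∧ γ.getLast? = some J'

/-- The subsupport of a path: the sequence of unions of consecutive entries. -/
def subSup {I : Type*} [DecidableEq I] (γ : List (Finset I)) : List (Finset I) :=
  List.zipWith (· ∪ ·) γ γ.tail

open Classical in
/-- `kappa B γ`: the number of entries of the subsupport of `γ` that belong to `B`. -/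
noncomputable def kappa {I : Type*} [DecidableEq I] (B : Set (Finset I))
    (γ : List (Finset I)) : ℕ :=
  (subSup γ).countP fun J => decide (J ∈ B)

/-- `A` is `k`-connected in `H`: any two elements of `A` are joined by a `k`-path in `H`
with support contained in `A`. -/
def KConnectedIn {I : Type*} [DecidableEq I] (H : Set (Finset I)) (k : ℕ)
    (A : Set (Finset I)) : Prop :=
  ∀ J ∈ A, ∀ J' ∈ A, ∃ γ : List (Finset I),
    IsKPath H k γ ∧ Joins γ J J' ∧ ∀ K ∈ γ, K ∈ A

/-- `C` is a `k`-connected component of `A` in `H`: a maximal nonempty `k`-connected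
subset of `A`. -/
def IsKComponent {I : Type*} [DecidableEq I] (H : Set (Finset I)) (k : ℕ)
    (A C : Set (Finset I)) : Prop :=
  C.Nonempty ∧ C ⊆ A ∧ KConnectedIn H k C ∧
    ∀ C' : Set (Finset I), C ⊆ C' → C' ⊆ A → KConnectedIn H k C' → C' = C

/-- `H` is 1-connected: `H(1)` is 1-connected in `H`. -/
def OneConnected {I : Type*} [DecidableEq I] (H : Set (Finset I)) : Prop :=
  KConnectedIn H 1 (level H 1)

/-- One-sided version of an elementary homotopic pair of 1-paths in `H`. -/
def ElemPairCore {I : Type*} [DecidableEq I] (H : Set (Finset I))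
    (ε ε' : List (Finset I)) : Prop :=
  ε = ε'
  ∨ (∃ i₁ i₂ : I, ε = [{i₁}, {i₂}, {i₁}] ∧ ε' = [{i₁}])
  ∨ (∃ i₁ i₂ i₃ : I, ε = [{i₁}, {i₂}] ∧ ε' = [{i₁}, {i₃}, {i₂}] ∧
      IsKPath H 2 [{i₁, i₃}, {i₃, i₂}])

/-- An elementary homotopic pair of 1-paths in `H` (up to swapping the two paths). -/
def ElemPair {I : Type*} [DecidableEq I] (H : Set (Finset I))
    (ε ε' : List (Finset I)) : Prop :=
  ElemPairCore H ε ε' ∨ ElemPairCore H ε' ε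

/-- `γ₂` is obtained from `γ₁` by an elementary homotopy. -/
def ElemHomotopy {I : Type*} [DecidableEq I] (H : Set (Finset I))
    (γ₁ γ₂ : List (Finset I)) : Prop :=
  ∃ δ ε₁ ε₂ ρ : List (Finset I),
    ElemPair H ε₁ ε₂ ∧ γ₁ = δ ++ ε₁ ++ ρ ∧ γ₂ = δ ++ ε₂ ++ ρ

/-- `γ` and `γ'` are homotopically equivalent in `H` with support in `A`: they are linked
by a finite chain of elementary homotopies in which every intermediate 1-path has
support in `A`. -/
def HomotopicIn {I : Type*} [DecidableEq I] (H A : Set (Finset I))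
    (γ γ' : List (Finset I)) : Prop :=
  (IsKPath H 1 γ ∧ ∀ J ∈ γ, J ∈ A) ∧
    Relation.ReflTransGen
      (fun g₁ g₂ => ElemHomotopy H g₁ g₂ ∧ IsKPath H 1 g₂ ∧ ∀ J ∈ g₂, J ∈ A) γ γ'

/-- A 1-connected subset `A ⊆ H(1)` is simply connected in `H`: any two 1-paths in `H`
with support in `A` joining the same strata are homotopically equivalent in `H` with
support in `A`. -/
def SimplyConnectedIn {I : Type*} [DecidableEq I] (H A : Set (Finset I)) : Prop :=
  KConnectedIn H 1 A ∧
    ∀ γ γ' : List (Finset I), IsKPath H 1 γ → IsKPath H 1 γ' →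
      (∀ J ∈ γ, J ∈ A) → (∀ J ∈ γ', J ∈ A) →
      γ.head? = γ'.head? → γ.getLast? = γ'.getLast? →
      HomotopicIn H A γ γ'

/-- `H` is simply connected: `H(1)` is simply connected in `H`. -/
def SimplyConnected {I : Type*} [DecidableEq I] (H : Set (Finset I)) : Prop :=
  SimplyConnectedIn H (level H 1)

/-- The closure of `A` in `H`: the strata of `H` containing some element of `A`. -/
def Cl {I : Type*} (H A : Set (Finset I)) : Set (Finset I) :=
  {J' ∈ H | ∃ J ∈ A, J ⊆ J'}

/-- A datum of nodal strata `(N, {P_J})` in `H`: a subset `N ⊆ H` together with, for each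
`J ∈ N`, a partition `P_J = {J₊, J₋}` of `J` into two nonempty parts, such that for every
`J ∈ N` and `J' ⊆ J` one has `J' ∈ N` iff `J' ∩ J₊ ≠ ∅ ≠ J' ∩ J₋`, and in that case
`P_{J'} = {J' ∩ J₊, J' ∩ J₋}`. -/
structure NodalDatum {I : Type*} [DecidableEq I] (H : Set (Finset I)) : Type _ where
  N : Set (Finset I)
  N_sub : N ⊆ H
  plus : Finset I → Finset I
  minus : Finset I → Finset I
  plus_nonempty : ∀ J ∈ N, (plus J).Nonempty
  minus_nonempty : ∀ J ∈ N, (minus J).Nonempty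
  union_eq : ∀ J ∈ N, plus J ∪ minus J = J
  disj : ∀ J ∈ N, Disjoint (plus J) (minus J)
  mem_iff : ∀ J ∈ N, ∀ J' : Finset I, J' ⊆ J →
    (J' ∈ N ↔ (J' ∩ plus J).Nonempty ∧ (J' ∩ minus J).Nonempty)
  part_eq : ∀ J ∈ N, ∀ J' : Finset I, J' ⊆ J → J' ∈ N →
    ({plus J', minus J'} : Set (Finset I)) = {J' ∩ plus J, J' ∩ minus J}

/-- `N*`: the set of uninterrupted nodal strata, i.e. `J ∈ N` with `Cl_H({J}) ⊆ N`. -/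
def Nstar {I : Type*} [DecidableEq I] {H : Set (Finset I)} (D : NodalDatum H) :
    Set (Finset I) :=
  {J ∈ D.N | ∀ J' ∈ H, J ⊆ J' → J' ∈ D.N}

/-- A nodal block of `N` in `H`: a 2-connected component of `N(2) = N ∩ H(2)` in `H`. -/
def IsNodalBlock {I : Type*} [DecidableEq I] {H : Set (Finset I)} (D : NodalDatum H)
    (B : Set (Finset I)) : Prop :=
  IsKComponent H 2 (D.N ∩ level H 2) B

/-- A nodal separating block: a nodal block contained in `N*`. -/
def IsSepBlock {I : Type*} [DecidableEq I] {H : Set (Finset I)} (D : NodalDatum H)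
    (B : Set (Finset I)) : Prop :=
  IsNodalBlock D B ∧ B ⊆ Nstar D

/-- The separator set: the union of all nodal separating blocks. -/
def SepSet {I : Type*} [DecidableEq I] {H : Set (Finset I)} (D : NodalDatum H) :
    Set (Finset I) :=
  ⋃₀ {B | IsSepBlock D B}

/-- `A_B(i)`: the set of `{j} ∈ H(1)` joined to `{i}` by a 1-path `γ` in `H` with
`κ_B(γ)` even. -/
def ABset {I : Type*} [DecidableEq I] (H B : Set (Finset I)) (i : I) : Set (Finset I) :=
  {J ∈ level H 1 | ∃ γ : List (Finset I),
    IsKPath H 1 γ ∧ Joins γ {i} J ∧ Even (kappa B γ)}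

/-- `B_B(i)`: the set of `{j} ∈ H(1)` joined to `{i}` by a 1-path `γ` in `H` with
`κ_B(γ)` odd. -/
def BBset {I : Type*} [DecidableEq I] (H B : Set (Finset I)) (i : I) : Set (Finset I) :=
  {J ∈ level H 1 | ∃ γ : List (Finset I),
    IsKPath H 1 γ ∧ Joins γ {i} J ∧ Odd (kappa B γ)}

open Classical in
/-- `Φ_m` for the enumeration `B` of the nodal separating blocks and base point `i₀`,
evaluated on the singleton stratum `{i}` (identified with `i`):
`Φ_m({i})(ℓ) = 0` if `{i} ∈ A_{B_ℓ}(i₀)` and `Φ_m({i})(ℓ) = 1` (`true`) if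
`{i} ∈ B_{B_ℓ}(i₀)`. -/
noncomputable def PhiM {I : Type*} [DecidableEq I] {n : ℕ} (H : Set (Finset I)) (i₀ : I)
    (B : Fin n → Set (Finset I)) (m : ℕ) (hm : m ≤ n) (i : I) : Fin m → Bool :=
  fun ℓ => decide (({i} : Finset I) ∈ BBset H (B (Fin.castLE hm ℓ)) i₀)

section Aux

variable {I : Type*} [DecidableEq I]

lemma subSup_cons_cons (x y : Finset I) (t : List (Finset I)) :
    subSup (x :: y :: t) = (x ∪ y) :: subSup (y :: t) := rfl

lemma subSup_concat : ∀ (γ : List (Finset I)) (a b : Finset I),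
    γ.getLast? = some a → subSup (γ ++ [b]) = subSup γ ++ [a ∪ b]
  | [], a, b, h => by simp at h
  | [x], a, b, h => by
      simp at h
      subst h
      rfl
  | x :: y :: t, a, b, h => by
      have h' : (y :: t).getLast? = some a := by
        rwa [List.getLast?_cons_cons] at h
      have ih := subSup_concat (y :: t) a b h'
      show subSup (x :: y :: (t ++ [b])) = _
      rw [subSup_cons_cons, subSup_cons_cons]
      rw [show (y :: (t ++ [b])) = (y :: t) ++ [b] from rfl, ih]
      rfl

open Classical in
lemma kappa_concat (Bs : Set (Finset I)) (γ : List (Finset I)) (a b : Finset I)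
    (h : γ.getLast? = some a) :
    kappa Bs (γ ++ [b]) = kappa Bs γ + (if a ∪ b ∈ Bs then 1 else 0) := by
  unfold kappa
  rw [subSup_concat γ a b h, List.countP_append]
  by_cases h' : a ∪ b ∈ Bs <;> simp [h']

/-- Transfer of `BBset`-membership across an edge not in `Bs`. -/
lemma bbset_step {H : Set (Finset I)} (hH : IsCSS H) (Bs : Set (Finset I)) (i₀ i₁ i₂ : I)
    (h2 : ({i₁, i₂} : Finset I) ∈ level H 2) (hnB : ({i₁, i₂} : Finset I) ∉ Bs)
    (h : ({i₁} : Finset I) ∈ BBset H Bs i₀) : ({i₂} : Finset I) ∈ BBset H Bs i₀ := by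
  obtain ⟨-, γ, ⟨hne, hmem, hch⟩, ⟨hhd, htl⟩, hodd⟩ := h
  have h1 : ({i₂} : Finset I) ∈ level H 1 := ⟨hH.2 i₂, Finset.card_singleton i₂⟩
  refine ⟨h1, γ ++ [{i₂}], ⟨by simp, ?_, ?_⟩, ⟨?_, ?_⟩, ?_⟩
  · intro J hJ
    rcases List.mem_append.1 hJ with hJ | hJ
    · exact hmem J hJ
    · simp at hJ; subst hJ; exact h1
  · refine List.isChain_append.2 ⟨hch, List.isChain_singleton _, ?_⟩
    intro x hx y hy
    rw [htl] at hx
    simp at hx hy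
    subst hx; subst hy
    simpa using h2
  · rw [List.head?_append_of_ne_nil _ hne]
    exact hhd
  · simp
  · rw [kappa_concat Bs γ {i₁} {i₂} htl]
    have he : ({i₁} : Finset I) ∪ {i₂} = {i₁, i₂} := rfl
    rw [he, if_neg hnB]
    simpa using hodd

lemma bbset_iff {H : Set (Finset I)} (hH : IsCSS H) (Bs : Set (Finset I)) (i₀ i₁ i₂ : I)
    (h2 : ({i₁, i₂} : Finset I) ∈ level H 2) (hnB : ({i₁, i₂} : Finset I) ∉ Bs) :
    (({i₁} : Finset I) ∈ BBset H Bs i₀) ↔ (({i₂} : Finset I) ∈ BBset H Bs i₀) := by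
  have h2' : ({i₂, i₁} : Finset I) ∈ level H 2 := by rwa [Finset.pair_comm]
  have hnB' : ({i₂, i₁} : Finset I) ∉ Bs := by rwa [Finset.pair_comm]
  exact ⟨bbset_step hH Bs i₀ i₁ i₂ h2 hnB, bbset_step hH Bs i₀ i₂ i₁ h2' hnB'⟩

/-- Splicing two `k`-paths sharing an endpoint. -/
lemma splice {H : Set (Finset I)} {k : ℕ} {γ₁ γ₂ : List (Finset I)} {J₁ J J₂ : Finset I}
    (h1 : IsKPath H k γ₁) (h2 : IsKPath H k γ₂)
    (hj1 : Joins γ₁ J₁ J) (hj2 : Joins γ₂ J J₂) :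
    IsKPath H k (γ₁ ++ γ₂.tail) ∧ Joins (γ₁ ++ γ₂.tail) J₁ J₂ ∧
      ∀ K ∈ γ₁ ++ γ₂.tail, K ∈ γ₁ ∨ K ∈ γ₂ := by
  obtain ⟨hne1, hmem1, hch1⟩ := h1
  obtain ⟨hne2, hmem2, hch2⟩ := h2
  obtain ⟨t, rfl⟩ : ∃ t, γ₂ = J :: t := by
    cases γ₂ with
    | nil => exact absurd rfl hne2
    | cons z t =>
      have hz : z = J := by simpa using hj2.1
      exact ⟨t, by rw [hz]⟩
  simp only [List.tail_cons]
  refine ⟨⟨by simp [hne1], ?_, ?_⟩, ⟨?_, ?_⟩, ?_⟩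
  · intro K hK
    rcases List.mem_append.1 hK with hK | hK
    · exact hmem1 K hK
    · exact hmem2 K (by simp [hK])
  · refine List.isChain_append.2 ⟨hch1, hch2.tail, ?_⟩
    intro x hx y hy
    rw [hj1.2] at hx
    have hxJ : J = x := by simpa using hx
    cases t with
    | nil => simp at hy
    | cons w t' =>
      have hw : w = y := by simpa using hy
      rw [← hxJ, ← hw]
      exact (List.isChain_cons_cons.1 hch2).1
  · rw [List.head?_append_of_ne_nil _ hne1]; exact hj1.1
  · cases t with
    | nil =>
      have hJ2 : J = J₂ := by simpa using hj2.2
      simpa [← hJ2] using hj1.2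
    | cons w t' =>
      rw [List.getLast?_append_cons]
      rw [← List.getLast?_cons_cons (b := w) (l := t') (a := J)]
      exact hj2.2
  · intro K hK
    rcases List.mem_append.1 hK with hK | hK
    · exact Or.inl hK
    · exact Or.inr (by simp [hK])

lemma kconn_union {H : Set (Finset I)} {k : ℕ} {C C' : Set (Finset I)} {J : Finset I}
    (hC : KConnectedIn H k C) (hC' : KConnectedIn H k C')
    (hJ : J ∈ C) (hJ' : J ∈ C') : KConnectedIn H k (C ∪ C') := by
  have cross : ∀ J₁ ∈ C, ∀ J₂ ∈ C', ∃ γ, IsKPath H k γ ∧ Joins γ J₁ J₂ ∧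
      ∀ K ∈ γ, K ∈ C ∪ C' := by
    intro J₁ h₁ J₂ h₂
    obtain ⟨γ₁, p1, j1, s1⟩ := hC J₁ h₁ J hJ
    obtain ⟨γ₂, p2, j2, s2⟩ := hC' J hJ' J₂ h₂
    obtain ⟨p, j, s⟩ := splice p1 p2 j1 j2
    exact ⟨γ₁ ++ γ₂.tail, p, j, fun K hK => (s K hK).elim
      (fun h => Or.inl (s1 K h)) (fun h => Or.inr (s2 K h))⟩
  intro J₁ h₁ J₂ h₂
  rcases h₁ with h₁ | h₁ <;> rcases h₂ with h₂ | h₂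
  · obtain ⟨γ, p, j, s⟩ := hC J₁ h₁ J₂ h₂
    exact ⟨γ, p, j, fun K hK => Or.inl (s K hK)⟩
  · exact cross J₁ h₁ J₂ h₂
  · obtain ⟨γ₁, p1, j1, s1⟩ := hC' J₁ h₁ J hJ'
    obtain ⟨γ₂, p2, j2, s2⟩ := hC J hJ J₂ h₂
    obtain ⟨p, j, s⟩ := splice p1 p2 j1 j2
    exact ⟨γ₁ ++ γ₂.tail, p, j, fun K hK => (s K hK).elim
      (fun h => Or.inr (s1 K h)) (fun h => Or.inl (s2 K h))⟩
  · obtain ⟨γ, p, j, s⟩ := hC' J₁ h₁ J₂ h₂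
    exact ⟨γ, p, j, fun K hK => Or.inr (s K hK)⟩

lemma comp_eq_of_mem {H : Set (Finset I)} {k : ℕ} {A C C' : Set (Finset I)}
    (hC : IsKComponent H k A C) (hC' : IsKComponent H k A C')
    {J : Finset I} (hJ : J ∈ C) (hJ' : J ∈ C') : C = C' := by
  have hu : KConnectedIn H k (C ∪ C') := kconn_union hC.2.2.1 hC'.2.2.1 hJ hJ'
  have h1 : C ∪ C' = C := hC.2.2.2 _ Set.subset_union_left
    (Set.union_subset hC.2.1 hC'.2.1) hu
  have h2 : C ∪ C' = C' := hC'.2.2.2 _ Set.subset_union_right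
    (Set.union_subset hC.2.1 hC'.2.1) hu
  rw [← h1, h2]

/-- Propagation of a property along a chain. -/
lemma chain'_propagate {α : Type*} {r : α → α → Prop} {P Q : α → Prop}
    (step : ∀ x y, Q x → Q y → r x y → P x → P y) :
    ∀ l : List α, l.Chain' r → (∀ x ∈ l, Q x) → ∀ a, l.head? = some a → P a →
      ∀ x ∈ l, P x := by
  intro l
  induction l with
  | nil => intro _ _ a _ _ x hx; simp at hx
  | cons x t ih =>
    intro hch hQ a ha hP y hy
    have hax : a = x := by simpa using ha.symm
    subst hax
    rcases List.mem_cons.1 hy with rfl | hy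
    · exact hP
    · cases t with
      | nil => simp at hy
      | cons z t' =>
        have hr := (List.isChain_cons_cons.1 hch).1
        have hPz : P z := step a z (hQ a (by simp)) (hQ z (by simp)) hr hP
        exact ih (List.isChain_cons_cons.1 hch).2 (fun w hw => hQ w (by simp [hw]))
          z rfl hPz y hy

end Aux

/-- For every `0 ≤ m < n` there is `δ^m ∈ Δ_m` such that for every
stratum `{i₁, i₂} ∈ B_{m+1}`, both `{i₁}` and `{i₂}` lie in `Φ_m⁻¹(δ^m)`. -/
theorem common_value_on_next_block
    {I : Type*} [Fintype I] [DecidableEq I] (H : Set (Finset I))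
    (hH : IsCSS H) (hsc : SimplyConnected H)
    (D : NodalDatum H) (n : ℕ) (B : Fin n → Set (Finset I))
    (hblock : ∀ ℓ : Fin n, IsSepBlock D (B ℓ)) (hinj : Function.Injective B)
    (hsurj : ∀ C : Set (Finset I), IsSepBlock D C → ∃ ℓ : Fin n, C = B ℓ)
    (i₀ : I) (m : ℕ) (hm : m < n) :
    ∃ δ ∈ Set.range (PhiM H i₀ B m hm.le),
      ∀ i₁ i₂ : I, ({i₁, i₂} : Finset I) ∈ B ⟨m, hm⟩ →
        PhiM H i₀ B m hm.le i₁ = δ ∧ PhiM H i₀ B m hm.le i₂ = δ := by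

  classical
  set blk := B ⟨m, hm⟩ with hblk
  have hcomp : IsKComponent H 2 (D.N ∩ level H 2) blk := (hblock ⟨m, hm⟩).1
  have hsub : blk ⊆ level H 2 := fun J hJ => (hcomp.2.1 hJ).2
  have key : ∀ i₁ i₂ : I, ({i₁, i₂} : Finset I) ∈ blk →
      PhiM H i₀ B m hm.le i₁ = PhiM H i₀ B m hm.le i₂ := by
    intro i₁ i₂ hpair
    funext ℓ
    have hne : B (Fin.castLE hm.le ℓ) ≠ blk := by
      intro h
      have h' := hinj h
      have : (ℓ : ℕ) = m := congrArg Fin.val h'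
      omega
    have hnotin : ({i₁, i₂} : Finset I) ∉ B (Fin.castLE hm.le ℓ) := by
      intro hin
      exact hne (comp_eq_of_mem (hblock _).1 hcomp hin hpair)
    have h2 : ({i₁, i₂} : Finset I) ∈ level H 2 := hsub hpair
    unfold PhiM
    simp only [decide_eq_decide]
    exact bbset_iff hH _ i₀ i₁ i₂ h2 hnotin
  obtain ⟨J₀, hJ₀⟩ := hcomp.1
  obtain ⟨a, b, hab, hJ₀ab⟩ := Finset.card_eq_two.1 (hsub hJ₀).2
  refine ⟨PhiM H i₀ B m hm.le a, ⟨a, rfl⟩, ?_⟩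
  set δ := PhiM H i₀ B m hm.le a with hδ
  have main : ∀ J ∈ blk, ∀ x ∈ J, PhiM H i₀ B m hm.le x = δ := by
    intro J hJ
    obtain ⟨γ, ⟨hne, hmem, hch⟩, ⟨hhd, htl⟩, hsup⟩ := hcomp.2.2.1 J₀ hJ₀ J hJ
    have hstep : ∀ K K' : Finset I, K ∈ blk → K' ∈ blk →
        (K ∪ K') ∈ level H 3 →
        (∀ x ∈ K, PhiM H i₀ B m hm.le x = δ) →
        (∀ x ∈ K', PhiM H i₀ B m hm.le x = δ) := by
      intro K K' hK hK' hu hPK x hx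
      have hcK : K.card = 2 := (hsub hK).2
      have hcK' : K'.card = 2 := (hsub hK').2
      have hinter : (K ∩ K').Nonempty := by
        by_contra hcon
        rw [Finset.not_nonempty_iff_eq_empty] at hcon
        have h4 : (K ∪ K').card = 4 := by
          rw [Finset.card_union_of_disjoint (Finset.disjoint_iff_inter_eq_empty.2 hcon),
            hcK, hcK']
        rw [hu.2] at h4
        omega
      obtain ⟨y, hy⟩ := hinter
      have hyK : y ∈ K := (Finset.mem_inter.1 hy).1
      have hyK' : y ∈ K' := (Finset.mem_inter.1 hy).2
      by_cases hxy : x = y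
      · rw [hxy]; exact hPK y hyK
      · have hss : ({y, x} : Finset I) ⊆ K' := by
          intro z hz
          rw [Finset.mem_insert, Finset.mem_singleton] at hz
          rcases hz with rfl | rfl
          · exact hyK'
          · exact hx
        have hK'eq : K' = {y, x} := by
          refine (Finset.eq_of_subset_of_card_le hss ?_).symm
          simp [hcK', Finset.card_pair (fun h => hxy h.symm)]
        have hyx : ({y, x} : Finset I) ∈ blk := hK'eq ▸ hK'
        rw [← key y x hyx]
        exact hPK y hyK
    have hPJ₀ : ∀ x ∈ J₀, PhiM H i₀ B m hm.le x = δ := by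
      intro x hx
      rw [hJ₀ab] at hx
      simp at hx
      rcases hx with rfl | rfl
      · rfl
      · exact (key a x (hJ₀ab ▸ hJ₀)).symm
    have hJmem : J ∈ γ := by
      obtain ⟨hne', heq⟩ := List.mem_getLast?_eq_getLast (l := γ) (x := J) htl
      rw [heq]; exact List.getLast_mem hne'
    exact chain'_propagate (P := fun K => ∀ x ∈ K, PhiM H i₀ B m hm.le x = δ)
      (Q := fun K => K ∈ blk) hstep γ hch hsup J₀ hhd hPJ₀ J hJmem
  intro i₁ i₂ hpair
  exact ⟨main _ hpair i₁ (by simp), main _ hpair i₂ (by simp)⟩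
end

section
/- Let H be a simply connected combinatorial strata structure endowed with a datum (N, {P_J}) of nodal strata, with nodal separating blocks enumerated B₁, …, B_n and maps Φ_m as defined. Then for every 0 ≤ m ≤ n, the image Δ_m of Φ_m has exactly m+1 elements. -/
/-!
For a separating block `B`, every triangle of `H` has an even number of sides in `B`: a nodal
triangle has an apex `s` (its nodal sides are those through `s`), and a block containing one of
these sides contains the other. Hence the parity of `κ_B` is invariant under elementary
homotopies, and by simple connectivity `{j} ∈ B_B(i₀)` iff a path from `{i₀}` to `{j}` crosses
`B` an odd number of times. So across an edge `{x, y}` of `H`, `Φ_m` changes in coordinate `ℓ`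
iff `{x, y} ∈ B_ℓ`; in particular `Φ_m x = Φ_m y` when `{x, y}` is not nodal.

Two adjacent edges `{s, x}`, `{s, y}` of a block have a non-nodal third side `{x, y}` (it misses
the apex), so all edges of `B_ℓ` have the same image `e_ℓ` in `Δ_m`, and `Δ_m` is connected by
`e_1, …, e_m`. Coordinate `ℓ` is constant across every `e_j` with `j ≠ ℓ`, so each `e_ℓ` is a
bridge: `Δ_m` is a tree with `m` edges, hence has `m + 1` vertices.
-/

theorem IsCSS.singleton_mem_level {I : Type*} {H : Set (Finset I)} (hH : IsCSS H) (i : I) :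
    ({i} : Finset I) ∈ level H 1 :=
  ⟨hH.2 i, Finset.card_singleton i⟩

section

variable {I : Type*} [DecidableEq I] {H : Set (Finset I)} {k : ℕ}

/-- `KConnectedIn H k A` unfolds to `∀ J ∈ A, ∀ J' ∈ A, KJoinedIn H k A J J'`. -/
def KJoinedIn (H : Set (Finset I)) (k : ℕ) (A : Set (Finset I)) (J J' : Finset I) : Prop :=
  ∃ γ : List (Finset I), IsKPath H k γ ∧ Joins γ J J' ∧ ∀ K ∈ γ, K ∈ A

theorem IsKPath.append {l₁ l₂ : List (Finset I)} {J : Finset I}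
    (h₁ : IsKPath H k (l₁ ++ [J])) (h₂ : IsKPath H k (J :: l₂)) :
    IsKPath H k (l₁ ++ J :: l₂) := by
  refine ⟨by simp, fun K hK => ?_, ?_⟩
  · rcases List.mem_append.1 hK with hK | hK
    · exact h₁.2.1 K (List.mem_append_left _ hK)
    · exact h₂.2.1 K hK
  · have := h₁.2.2.append_overlap h₂.2.2 (List.cons_ne_nil J [])
    rwa [List.append_assoc, List.singleton_append] at this

theorem isKPath_pair {J J' : Finset I} (hJ : J ∈ level H k) (hJ' : J' ∈ level H k)
    (hu : J ∪ J' ∈ level H (k + 1)) : IsKPath H k [J, J'] :=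
  ⟨by simp, by simp [hJ, hJ'], List.isChain_pair.2 hu⟩

namespace KJoinedIn

variable {A A' : Set (Finset I)} {J J' J'' : Finset I}

theorem refl (hJ : J ∈ level H k) (hJA : J ∈ A) : KJoinedIn H k A J J :=
  ⟨[J], ⟨by simp, by simp [hJ], List.isChain_singleton _⟩, ⟨rfl, rfl⟩, by simpa using hJA⟩

theorem mono (h : KJoinedIn H k A J J') (hA : A ⊆ A') : KJoinedIn H k A' J J' :=
  let ⟨γ, hγ, hj, hs⟩ := h
  ⟨γ, hγ, hj, fun K hK => hA (hs K hK)⟩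

theorem trans (h : KJoinedIn H k A J J') (h' : KJoinedIn H k A J' J'') :
    KJoinedIn H k A J J'' := by
  obtain ⟨γ₁, hγ₁, ⟨hh₁, hl₁⟩, hs₁⟩ := h
  obtain ⟨γ₂, hγ₂, ⟨hh₂, hl₂⟩, hs₂⟩ := h'
  obtain ⟨l₁, rfl⟩ := List.getLast?_eq_some_iff.1 hl₁
  obtain ⟨l₂, rfl⟩ := List.head?_eq_some_iff.1 hh₂
  refine ⟨l₁ ++ J' :: l₂, hγ₁.append hγ₂, ⟨?_, ?_⟩, fun K hK => ?_⟩
  · cases l₁ <;> simp_all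
  · simpa using hl₂
  · rcases List.mem_append.1 hK with hK | hK
    · exact hs₁ K (List.mem_append_left _ hK)
    · exact hs₂ K hK

end KJoinedIn

theorem KConnectedIn.union {A A' : Set (Finset I)} (h : KConnectedIn H k A)
    (h' : KConnectedIn H k A') {J : Finset I} (hJ : J ∈ A) (hJ' : J ∈ A') :
    KConnectedIn H k (A ∪ A') := by
  have toJ : ∀ K ∈ A ∪ A', KJoinedIn H k (A ∪ A') K J := by
    rintro K (hK | hK)
    · exact KJoinedIn.mono (h K hK J hJ) Set.subset_union_left
    · exact KJoinedIn.mono (h' K hK J hJ') Set.subset_union_right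
  have fromJ : ∀ K ∈ A ∪ A', KJoinedIn H k (A ∪ A') J K := by
    rintro K (hK | hK)
    · exact KJoinedIn.mono (h J hJ K hK) Set.subset_union_left
    · exact KJoinedIn.mono (h' J hJ' K hK) Set.subset_union_right
  exact fun K hK K' hK' => (toJ K hK).trans (fromJ K' hK')

theorem kConnectedIn_pair {J J' : Finset I} (hJ : J ∈ level H k) (hJ' : J' ∈ level H k)
    (hu : J ∪ J' ∈ level H (k + 1)) : KConnectedIn H k {J, J'} := by
  have hu' : J' ∪ J ∈ level H (k + 1) := Finset.union_comm J J' ▸ hu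
  rintro K (rfl | rfl) K' (rfl | rfl)
  · exact KJoinedIn.refl hJ (by simp)
  · exact ⟨[K, K'], isKPath_pair hJ hJ' hu, ⟨rfl, rfl⟩, by simp⟩
  · exact ⟨[K, K'], isKPath_pair hJ' hJ hu', ⟨rfl, rfl⟩, by simp⟩
  · exact KJoinedIn.refl hJ' (by simp)

theorem KConnectedIn.induction {A : Set (Finset I)} (hA : KConnectedIn H k A)
    (P : Finset I → Prop)
    (hstep : ∀ J ∈ A, ∀ J' ∈ A, J ∪ J' ∈ level H (k + 1) → P J → P J')
    {J J' : Finset I} (hJ : J ∈ A) (hJ' : J' ∈ A) (h : P J) : P J' := by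
  obtain ⟨γ, hγ, ⟨hh, hl⟩, hs⟩ := hA J hJ J' hJ'
  obtain ⟨l, rfl⟩ := List.head?_eq_some_iff.1 hh
  have hchain : (J :: l).IsChain fun K K' => K ∈ A ∧ K' ∈ A ∧ K ∪ K' ∈ level H (k + 1) :=
    hγ.2.2.imp_of_mem_imp fun K K' hK hK' hr => ⟨hs K hK, hs K' hK', hr⟩
  exact hchain.induction P _ (fun K K' hr => hstep K hr.1 K' hr.2.1 hr.2.2) (fun _ => h) J'
    (List.mem_of_getLast? hl)

theorem OneConnected.induction (hc : OneConnected H) (hH : IsCSS H) (P : I → Prop)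
    (hstep : ∀ x y, ({x, y} : Finset I) ∈ level H 2 → P x → P y) {i j : I} (hi : P i) :
    P j := by
  refine KConnectedIn.induction hc (fun J => ∀ x ∈ J, P x) ?_ (hH.singleton_mem_level i)
    (hH.singleton_mem_level j) (by simpa using hi) j (Finset.mem_singleton_self j)
  rintro J hJ J' hJ' hu hP y hy
  obtain ⟨x, rfl⟩ := Finset.card_eq_one.1 hJ.2
  obtain ⟨y', rfl⟩ := Finset.card_eq_one.1 hJ'.2
  rw [Finset.mem_singleton] at hy
  subst hy
  exact hstep x y (by rwa [Finset.insert_eq]) (hP x (Finset.mem_singleton_self x))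

namespace IsKComponent

variable {A C C' : Set (Finset I)}

theorem eq_of_mem (hC : IsKComponent H k A C) (hC' : IsKComponent H k A C') {J : Finset I}
    (hJ : J ∈ C) (hJ' : J ∈ C') : C = C' := by
  have hU := hC.2.2.1.union hC'.2.2.1 hJ hJ'
  have hsub := Set.union_subset hC.2.1 hC'.2.1
  exact (hC.2.2.2 _ Set.subset_union_left hsub hU).symm.trans
    (hC'.2.2.2 _ Set.subset_union_right hsub hU)

theorem mem_of_union_mem (hC : IsKComponent H k A C) (hA : A ⊆ level H k) {J J' : Finset I}
    (hJ : J ∈ C) (hJ' : J' ∈ A) (hu : J ∪ J' ∈ level H (k + 1)) : J' ∈ C := by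
  have hU := hC.2.2.1.union (kConnectedIn_pair (hA (hC.2.1 hJ)) (hA hJ') hu) hJ (by simp)
  have hsub : C ∪ {J, J'} ⊆ A :=
    Set.union_subset hC.2.1 (by simp [Set.insert_subset_iff, hC.2.1 hJ, hJ'])
  rw [← hC.2.2.2 _ Set.subset_union_left hsub hU]
  simp

end IsKComponent

theorem Finset.nonempty_inter_singleton_and_nonempty_inter_iff {s : I} {M J T : Finset I}
    (hT : insert s M = T) (hJT : J ⊆ T) (hJ : J.card = 2) :
    ((J ∩ {s}).Nonempty ∧ (J ∩ M).Nonempty) ↔ s ∈ J := by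
  refine ⟨fun ⟨⟨x, hx⟩, _⟩ => ?_, fun hs => ⟨⟨s, by simp [hs]⟩, ?_⟩⟩
  · rw [Finset.mem_inter, Finset.mem_singleton] at hx
    exact hx.2 ▸ hx.1
  obtain ⟨t, htJ, hts⟩ := Finset.exists_mem_ne (by omega : 1 < J.card) s
  have htT := hJT htJ
  rw [← hT, Finset.mem_insert] at htT
  exact ⟨t, Finset.mem_inter.2 ⟨htJ, htT.resolve_left hts⟩⟩

theorem NodalDatum.exists_apex (D : NodalDatum H) {T : Finset I} (hT : T ∈ D.N)
    (hT3 : T.card = 3) : ∃ s ∈ T, ∀ J ⊆ T, J.card = 2 → (J ∈ D.N ↔ s ∈ J) := by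
  have hU := D.union_eq T hT
  have hsum : (D.plus T).card + (D.minus T).card = 3 := by
    rw [← Finset.card_union_of_disjoint (D.disj T hT), hU, hT3]
  have := (D.plus_nonempty T hT).card_pos
  have := (D.minus_nonempty T hT).card_pos
  rcases (by omega : (D.plus T).card = 1 ∨ (D.minus T).card = 1) with h | h
  · obtain ⟨s, hs⟩ := Finset.card_eq_one.1 h
    rw [hs, ← Finset.insert_eq] at hU
    refine ⟨s, hU ▸ Finset.mem_insert_self _ _, fun J hJ hJ2 => ?_⟩
    rw [D.mem_iff T hT J hJ, hs]
    exact Finset.nonempty_inter_singleton_and_nonempty_inter_iff hU hJ hJ2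
  · obtain ⟨s, hs⟩ := Finset.card_eq_one.1 h
    rw [hs, Finset.union_comm, ← Finset.insert_eq] at hU
    refine ⟨s, hU ▸ Finset.mem_insert_self _ _, fun J hJ hJ2 => ?_⟩
    rw [D.mem_iff T hT J hJ, hs, and_comm]
    exact Finset.nonempty_inter_singleton_and_nonempty_inter_iff hU hJ hJ2

theorem Finset.pairwise_ne_of_card_eq_three {a b c : I} (h : ({a, b, c} : Finset I).card = 3) :
    a ≠ b ∧ b ≠ c ∧ c ≠ a := by
  refine ⟨?_, ?_, ?_⟩ <;> rintro rfl <;> simp at h <;>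
    exact absurd h (Finset.card_le_two.trans_lt (by norm_num)).ne

theorem Finset.exists_eq_pair_of_mem {s : I} {e : Finset I} (hs : s ∈ e) (he : e.card = 2) :
    ∃ x, x ≠ s ∧ e = {s, x} := by
  obtain ⟨x, hx⟩ := Finset.card_eq_one.1 (by rw [Finset.card_erase_of_mem hs, he] :
    (e.erase s).card = 1)
  refine ⟨x, (Finset.mem_erase.1 (hx ▸ Finset.mem_singleton_self x)).1, ?_⟩
  rw [← hx, Finset.insert_erase hs]

theorem Finset.union_eq_of_ne_of_card_two {e J T : Finset I} (he : e ⊆ T) (hJ : J ⊆ T)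
    (he2 : e.card = 2) (hJ2 : J.card = 2) (hT : T.card = 3) (hne : e ≠ J) : e ∪ J = T := by
  refine Finset.eq_of_subset_of_card_le (Finset.union_subset he hJ) ?_
  by_contra! hlt
  have h1 := Finset.eq_of_subset_of_card_le (Finset.subset_union_left : e ⊆ e ∪ J) (by omega)
  have h2 := Finset.eq_of_subset_of_card_le (Finset.subset_union_right : J ⊆ e ∪ J) (by omega)
  exact hne (h1.trans h2.symm)

theorem Sym2.mk_eq_mk_of_pair_eq {α : Type*} [DecidableEq α] {u v u' v' : α}
    (h : ({u, v} : Finset α) = {u', v'}) : s(u, v) = s(u', v') :=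
  Sym2.ext fun x => by simpa using congrArg (x ∈ ·) h

namespace IsSepBlock

variable {D : NodalDatum H} {B : Set (Finset I)}

theorem subset_level (hB : IsSepBlock D B) : B ⊆ level H 2 := fun _ hJ => (hB.1.2.1 hJ).2

theorem mem_iff_of_triangle (hH : IsCSS H) (hB : IsSepBlock D B) {T e : Finset I}
    (hT : T ∈ level H 3) (he : e ∈ B) (heT : e ⊆ T) :
    ∃ s ∈ T, ∀ J ⊆ T, J.card = 2 → (J ∈ B ↔ s ∈ J) := by
  obtain ⟨s, hsT, hapex⟩ := D.exists_apex ((hB.2 he).2 T hT.1 heT) hT.2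
  refine ⟨s, hsT, fun J hJ hJ2 =>
    ⟨fun hJB => (hapex J hJ hJ2).1 (hB.1.2.1 hJB).1, fun hsJ => ?_⟩⟩
  rcases eq_or_ne e J with rfl | hne
  · exact he
  have he2 := (hB.subset_level he).2
  refine hB.1.mem_of_union_mem (fun _ h => h.2) he
    ⟨(hapex J hJ hJ2).2 hsJ, hH.1 T hT.1 J hJ, hJ2⟩ ?_
  rwa [Finset.union_eq_of_ne_of_card_two heT hJ he2 hJ2 hT.2 hne]

theorem even_kappa_triangle (hH : IsCSS H) (hB : IsSepBlock D B) {a b c : I}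
    (hT : ({a, b, c} : Finset I) ∈ level H 3) : Even (kappa B [{a}, {b}, {c}, {a}]) := by
  obtain ⟨hab, hbc, hca⟩ := Finset.pairwise_ne_of_card_eq_three hT.2
  have hsub_ab : ({a, b} : Finset I) ⊆ {a, b, c} := by simp [Finset.insert_subset_iff]
  have hsub_bc : ({b, c} : Finset I) ⊆ {a, b, c} := by simp
  have hsub_ca : ({c, a} : Finset I) ⊆ {a, b, c} := by simp [Finset.insert_subset_iff]
  by_cases hside : ∃ e ∈ B, e ⊆ {a, b, c}
  · obtain ⟨e, he, heT⟩ := hside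
    obtain ⟨s, hsT, hs⟩ := hB.mem_iff_of_triangle hH hT he heT
    have hab' := hs _ hsub_ab (Finset.card_pair hab)
    have hbc' := hs _ hsub_bc (Finset.card_pair hbc)
    have hca' := hs _ hsub_ca (Finset.card_pair hca)
    simp only [Finset.mem_insert, Finset.mem_singleton] at hsT hab' hbc' hca'
    rcases hsT with rfl | rfl | rfl <;>
      simp [kappa, subSup, hab', hbc', hca', hab, hbc, hca, hab.symm, hbc.symm, hca.symm]
  · push Not at hside
    have hab' : ({a, b} : Finset I) ∉ B := fun h => hside _ h hsub_ab
    have hbc' : ({b, c} : Finset I) ∉ B := fun h => hside _ h hsub_bc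
    have hca' : ({c, a} : Finset I) ∉ B := fun h => hside _ h hsub_ca
    simp [kappa, subSup, hab', hbc', hca']

theorem image_eq_of_union_mem (hH : IsCSS H) (hB : IsSepBlock D B) {β : Type*} [DecidableEq β]
    {g : I → β} (hg : ∀ x y : I, ({x, y} : Finset I) ∈ level H 2 → {x, y} ∉ D.N → g x = g y)
    {e e' : Finset I} (he : e ∈ B) (he' : e' ∈ B) (hT : e ∪ e' ∈ level H 3) :
    e.image g = e'.image g := by
  obtain ⟨s, -, hapex⟩ :=
    D.exists_apex ((hB.2 he).2 _ hT.1 Finset.subset_union_left) hT.2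
  have he2 := (hB.subset_level he).2
  have he'2 := (hB.subset_level he').2
  obtain ⟨x, hxs, rfl⟩ := Finset.exists_eq_pair_of_mem
    ((hapex _ Finset.subset_union_left he2).1 (hB.1.2.1 he).1) he2
  obtain ⟨y, hys, rfl⟩ := Finset.exists_eq_pair_of_mem
    ((hapex _ Finset.subset_union_right he'2).1 (hB.1.2.1 he').1) he'2
  have hxy : x ≠ y := by
    rintro rfl
    have := hT.2
    rw [Finset.union_self, Finset.card_pair hxs.symm] at this
    omega
  have hsub : ({x, y} : Finset I) ⊆ {s, x} ∪ {s, y} := by simp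
  have hgxy := hg x y ⟨hH.1 _ hT.1 _ hsub, Finset.card_pair hxy⟩ fun hN => by
    simpa [hxs.symm, hys.symm] using (hapex _ hsub (Finset.card_pair hxy)).1 hN
  simp [hgxy]

theorem mk_eq_mk_of_mem (hH : IsCSS H) (hB : IsSepBlock D B) {β : Type*} [DecidableEq β]
    {g : I → β} (hg : ∀ x y : I, ({x, y} : Finset I) ∈ level H 2 → {x, y} ∉ D.N → g x = g y)
    {x y x' y' : I} (h : ({x, y} : Finset I) ∈ B) (h' : ({x', y'} : Finset I) ∈ B) :
    s(g x, g y) = s(g x', g y') := by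
  have himage : ({x, y} : Finset I).image g = ({x', y'} : Finset I).image g :=
    hB.1.2.2.1.induction (fun J => ({x, y} : Finset I).image g = J.image g)
      (fun _ hJ _ hJ' hu h => h.trans (hB.image_eq_of_union_mem hH hg hJ hJ' hu)) h h' rfl
  simp only [Finset.image_insert, Finset.image_singleton] at himage
  exact Sym2.mk_eq_mk_of_pair_eq himage

theorem exists_pair_mem (hB : IsSepBlock D B) : ∃ a b : I, ({a, b} : Finset I) ∈ B := by
  obtain ⟨e, he⟩ := hB.1.1
  obtain ⟨a, b, -, rfl⟩ := Finset.card_eq_two.1 (hB.subset_level he).2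
  exact ⟨a, b, he⟩

end IsSepBlock

theorem OneConnected.reachable_fromEdgeSet (hc : OneConnected H) (hH : IsCSS H)
    {D : NodalDatum H} {K V : Type*} [DecidableEq V] {C : K → Set (Finset I)}
    (hC : ∀ k, IsSepBlock D (C k)) {a b : K → I} (hab : ∀ k, ({a k, b k} : Finset I) ∈ C k)
    {φ : I → V} (hφ : ∀ x y, ({x, y} : Finset I) ∈ level H 2 → φ x ≠ φ y → ∃ k, {x, y} ∈ C k)
    (i j : I) : (SimpleGraph.fromEdgeSet (Set.range fun k => s(φ (a k), φ (b k)))).Reachable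
      (φ i) (φ j) := by
  have hnodal : ∀ x y, ({x, y} : Finset I) ∈ level H 2 → {x, y} ∉ D.N → φ x = φ y :=
    fun x y hxy hN => by_contra fun hne =>
      let ⟨k, hk⟩ := hφ x y hxy hne
      hN ((hC k).1.2.1 hk).1
  set G := SimpleGraph.fromEdgeSet (Set.range fun k => s(φ (a k), φ (b k)))
  refine hc.induction hH (fun j => G.Reachable (φ i) (φ j)) (fun x y hxy hx => hx.trans ?_)
    (SimpleGraph.Reachable.refl _)
  by_cases hxy' : φ x = φ y
  · rw [hxy']
  obtain ⟨k, hk⟩ := hφ x y hxy hxy'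
  refine SimpleGraph.Adj.reachable ((SimpleGraph.fromEdgeSet_adj _).2 ⟨⟨k, ?_⟩, hxy'⟩)
  exact ((hC k).mk_eq_mk_of_mem hH hnodal hk (hab k)).symm

theorem subSup_append_cons (xs : List (Finset I)) (y : Finset I) (ys : List (Finset I)) :
    subSup (xs ++ y :: ys) = subSup (xs ++ [y]) ++ subSup (y :: ys) := by
  induction xs with
  | nil => rfl
  | cons a xs ih =>
    cases xs with
    | nil => rfl
    | cons b xs =>
      show (a ∪ b) :: subSup ((b :: xs) ++ y :: ys) = ((a ∪ b) :: subSup ((b :: xs) ++ [y])) ++ _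
      rw [ih]
      rfl

theorem kappa_append_cons (B : Set (Finset I)) (xs : List (Finset I)) (y : Finset I)
    (ys : List (Finset I)) :
    kappa B (xs ++ y :: ys) = kappa B (xs ++ [y]) + kappa B (y :: ys) := by
  rw [kappa, kappa, kappa, subSup_append_cons, List.countP_append]

theorem kappa_append_append (B : Set (Finset I)) (δ ρ : List (Finset I)) {ε : List (Finset I)}
    {x z : Finset I} (hx : ε.head? = some x) (hz : ε.getLast? = some z) :
    kappa B (δ ++ ε ++ ρ) = kappa B (δ ++ [x]) + kappa B ε + kappa B (z :: ρ) := by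
  obtain ⟨t, rfl⟩ := List.head?_eq_some_iff.1 hx
  obtain ⟨u, hu⟩ := List.getLast?_eq_some_iff.1 hz
  calc kappa B (δ ++ x :: t ++ ρ) = kappa B (δ ++ [x]) + kappa B (x :: t ++ ρ) := by
        rw [List.append_assoc, List.cons_append, kappa_append_cons B δ x]
    _ = kappa B (δ ++ [x]) + (kappa B (x :: t) + kappa B (z :: ρ)) := by
        rw [hu, List.append_assoc, List.singleton_append, kappa_append_cons B u z]
    _ = _ := (add_assoc _ _ _).symm

/-- `κ_B` of the loop around a triangle counts its sides in `B`: `B` is a mod-2 cocycle. -/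
def EvenOnTriangles (H B : Set (Finset I)) : Prop :=
  ∀ a b c : I, ({a, b, c} : Finset I) ∈ level H 3 → Even (kappa B [{a}, {b}, {c}, {a}])

theorem IsSepBlock.evenOnTriangles {D : NodalDatum H} {B : Set (Finset I)} (hH : IsCSS H)
    (hB : IsSepBlock D B) : EvenOnTriangles H B :=
  fun _ _ _ hT => hB.even_kappa_triangle hH hT

section Parity

variable {B : Set (Finset I)}

theorem kappa_modEq_of_elemHomotopy (hB : EvenOnTriangles H B) {γ γ' : List (Finset I)}
    (h : ElemHomotopy H γ γ') : kappa B γ ≡ kappa B γ' [MOD 2] := by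
  obtain ⟨δ, ε, ε', ρ, hpair, rfl, rfl⟩ := h
  suffices key : ∀ ε ε', ElemPairCore H ε ε' →
      kappa B (δ ++ ε ++ ρ) ≡ kappa B (δ ++ ε' ++ ρ) [MOD 2] by
    rcases hpair with h | h
    exacts [key _ _ h, (key _ _ h).symm]
  rintro ε ε' (rfl | ⟨i₁, i₂, rfl, rfl⟩ | ⟨i₁, i₂, i₃, rfl, rfl, hp⟩)
  · rfl
  · rw [kappa_append_append B δ ρ (x := {i₁}) (z := {i₁}) rfl rfl,
      kappa_append_append B δ ρ (x := {i₁}) (z := {i₁}) rfl rfl]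
    refine Nat.ModEq.add_right _ (Nat.ModEq.add_left _ ?_)
    simp [kappa, subSup, List.countP_cons, Finset.pair_comm i₂ i₁, Nat.ModEq]
    omega
  · rw [kappa_append_append B δ ρ (x := {i₁}) (z := {i₂}) rfl rfl,
      kappa_append_append B δ ρ (x := {i₁}) (z := {i₂}) rfl rfl]
    refine Nat.ModEq.add_right _ (Nat.ModEq.add_left _ ?_)
    have hT : ({i₁, i₃, i₂} : Finset I) ∈ level H 3 := by
      convert List.isChain_pair.1 hp.2.2 using 2
      ext; simp
    have htri : kappa B [{i₁}, {i₃}, {i₂}, {i₁}] =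
        kappa B [{i₁}, {i₃}, {i₂}] + kappa B [{i₁}, {i₂}] := by
      simp [kappa, subSup, List.countP_cons, Finset.pair_comm i₂ i₁]
      omega
    have := Nat.even_iff.1 (hB _ _ _ hT)
    rw [htri] at this
    unfold Nat.ModEq
    omega

theorem kappa_modEq_of_homotopicIn (hB : EvenOnTriangles H B) {A : Set (Finset I)}
    {γ γ' : List (Finset I)} (h : HomotopicIn H A γ γ') : kappa B γ ≡ kappa B γ' [MOD 2] := by
  obtain ⟨-, hrel⟩ := h
  induction hrel with
  | refl => rfl
  | tail _ hstep ih => exact ih.trans (kappa_modEq_of_elemHomotopy hB hstep.1)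

namespace SimplyConnected

theorem kappa_modEq (hsc : SimplyConnected H) (hB : EvenOnTriangles H B)
    {γ γ' : List (Finset I)} {J J' : Finset I} (hγ : IsKPath H 1 γ) (hγ' : IsKPath H 1 γ')
    (hj : Joins γ J J') (hj' : Joins γ' J J') :
    kappa B γ ≡ kappa B γ' [MOD 2] :=
  kappa_modEq_of_homotopicIn hB <|
    hsc.2 γ γ' hγ hγ' hγ.2.1 hγ'.2.1 (hj.1.trans hj'.1.symm) (hj.2.trans hj'.2.symm)

theorem mem_BBset_iff (hsc : SimplyConnected H) (hB : EvenOnTriangles H B)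
    {γ : List (Finset I)} {i j : I} (hγ : IsKPath H 1 γ) (hj : Joins γ {i} {j}) :
    {j} ∈ BBset H B i ↔ Odd (kappa B γ) := by
  refine ⟨fun ⟨_, γ', hγ', hj', hodd⟩ => ?_,
    fun hodd => ⟨hγ.2.1 _ (List.mem_of_getLast? hj.2), γ, hγ, hj, hodd⟩⟩
  rw [Nat.odd_iff] at hodd ⊢
  exact Eq.trans (hsc.kappa_modEq hB hγ hγ' hj hj') hodd

theorem mem_BBset_iff_mem_BBset (hsc : SimplyConnected H) (hB : EvenOnTriangles H B)
    (hH : IsCSS H) (i : I) {x y : I} (hxy : ({x, y} : Finset I) ∈ level H 2) :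
    ({x} ∈ BBset H B i ↔ {y} ∈ BBset H B i) ↔ ({x, y} : Finset I) ∉ B := by
  obtain ⟨γ, hγ, hj, -⟩ := hsc.1 _ (hH.singleton_mem_level i) _ (hH.singleton_mem_level x)
  obtain ⟨l, rfl⟩ := List.getLast?_eq_some_iff.1 hj.2
  have hγ' : IsKPath H 1 (l ++ [{x}, {y}]) :=
    hγ.append (isKPath_pair (hH.singleton_mem_level x) (hH.singleton_mem_level y)
      (by rwa [← Finset.insert_eq]))
  have hj' : Joins (l ++ [{x}, {y}]) {i} {y} := ⟨by cases l <;> simp_all [Joins], by simp⟩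
  rw [hsc.mem_BBset_iff hB hγ hj, hsc.mem_BBset_iff hB hγ' hj', kappa_append_cons B l {x} [{y}]]
  by_cases h : ({x, y} : Finset I) ∈ B
  · have hpair : kappa B [{x}, {y}] = 1 := by simp [kappa, subSup, h]
    simp [hpair, h, Nat.odd_add_one, ← Nat.not_even_iff_odd]
  · have hpair : kappa B [{x}, {y}] = 0 := by simp [kappa, subSup, h]
    simp [hpair, h]

end SimplyConnected

end Parity

namespace SimpleGraph

variable {V K β : Type*} {a b : K → V} {f : K → V → β}

theorem isAcyclic_fromEdgeSet_of_separating (hsep : ∀ k, f k (a k) ≠ f k (b k))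
    (hinv : ∀ j k, j ≠ k → f k (a j) = f k (b j)) :
    (fromEdgeSet (Set.range fun k => s(a k, b k))).IsAcyclic := by
  rw [isAcyclic_iff_forall_adj_isBridge]
  intro v w hvw
  obtain ⟨⟨k, hk⟩, -⟩ := (fromEdgeSet_adj _).1 hvw
  have hconst : ∀ x y, ((fromEdgeSet (Set.range fun k => s(a k, b k))).deleteEdges
      {s(a k, b k)}).Reachable x y → f k x = f k y := by
    intro x y hxy
    rw [reachable_iff_reflTransGen] at hxy
    induction hxy with
    | refl => rfl
    | tail _ hadj ih =>
      rw [deleteEdges_adj, fromEdgeSet_adj] at hadj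
      obtain ⟨⟨⟨j, hj⟩, -⟩, hne⟩ := hadj
      have hjk : j ≠ k := by rintro rfl; exact hne hj.symm
      rcases Sym2.eq_iff.1 hj with ⟨rfl, rfl⟩ | ⟨rfl, rfl⟩
      exacts [ih.trans (hinv j k hjk), ih.trans (hinv j k hjk).symm]
  rw [isBridge_iff, ← hk]
  intro hreach
  rcases Sym2.eq_iff.1 hk with ⟨rfl, rfl⟩ | ⟨rfl, rfl⟩
  exacts [hsep k (hconst _ _ hreach), hsep k (hconst _ _ hreach).symm]

theorem nat_card_eq_of_separating [Finite V] (hsep : ∀ k, f k (a k) ≠ f k (b k))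
    (hinv : ∀ j k, j ≠ k → f k (a j) = f k (b j))
    (hconn : (fromEdgeSet (Set.range fun k => s(a k, b k))).Connected) :
    Nat.card V = Nat.card K + 1 := by
  have hinj : Function.Injective fun k => s(a k, b k) := by
    intro j k hjk
    by_contra hne
    rcases Sym2.eq_iff.1 hjk with ⟨h₁, h₂⟩ | ⟨h₁, h₂⟩
    · exact hsep k (h₁ ▸ h₂ ▸ hinv j k hne)
    · exact hsep k (h₁ ▸ h₂ ▸ (hinv j k hne).symm)
  have hedges : (fromEdgeSet (Set.range fun k => s(a k, b k))).edgeSet =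
      Set.range fun k => s(a k, b k) := by
    rw [edgeSet_fromEdgeSet, sdiff_eq_left, Set.disjoint_left]
    rintro _ ⟨k, rfl⟩ hdiag
    exact hsep k (congrArg (f k) (Sym2.mk_isDiag_iff.1 hdiag))
  rw [← (isTree_iff_connected_and_card.1
    ⟨hconn, isAcyclic_fromEdgeSet_of_separating hsep hinv⟩).2, hedges,
    Nat.card_range_of_injective hinj]

end SimpleGraph

theorem PhiM_apply_eq_iff {n m : ℕ} (hH : IsCSS H) (hsc : SimplyConnected H) (i₀ : I)
    {B : Fin n → Set (Finset I)} (hm : m ≤ n) {ℓ : Fin m}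
    (hB : EvenOnTriangles H (B (Fin.castLE hm ℓ))) {x y : I}
    (hxy : ({x, y} : Finset I) ∈ level H 2) :
    PhiM H i₀ B m hm x ℓ = PhiM H i₀ B m hm y ℓ ↔ ({x, y} : Finset I) ∉ B (Fin.castLE hm ℓ) := by
  simpa [PhiM] using hsc.mem_BBset_iff_mem_BBset hB hH i₀ hxy

end

theorem card_image_PhiM_general
    {I : Type*} [DecidableEq I] (H : Set (Finset I))
    (hH : IsCSS H) (hsc : SimplyConnected H)
    (D : NodalDatum H) (n : ℕ) (B : Fin n → Set (Finset I))
    (hblock : ∀ ℓ : Fin n, IsSepBlock D (B ℓ)) (hinj : Function.Injective B)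
    (i₀ : I) :
    ∀ (m : ℕ) (hm : m ≤ n), (Set.range (PhiM H i₀ B m hm)).ncard = m + 1 := by
  intro m hm
  set Φ := PhiM H i₀ B m hm
  set g : I → Set.range Φ := Set.rangeFactorization Φ
  have hchange : ∀ ℓ x y, ({x, y} : Finset I) ∈ level H 2 →
      (Φ x ℓ = Φ y ℓ ↔ ({x, y} : Finset I) ∉ B (Fin.castLE hm ℓ)) := fun ℓ x y =>
    PhiM_apply_eq_iff hH hsc i₀ hm ((hblock _).evenOnTriangles hH)
  choose a b hab using fun ℓ : Fin m => (hblock (Fin.castLE hm ℓ)).exists_pair_mem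
  have hab2 : ∀ ℓ, ({a ℓ, b ℓ} : Finset I) ∈ level H 2 := fun ℓ => (hblock _).subset_level (hab ℓ)
  have hsep : ∀ ℓ, (g (a ℓ)).1 ℓ ≠ (g (b ℓ)).1 ℓ := fun ℓ h => (hchange ℓ _ _ (hab2 ℓ)).1 h (hab ℓ)
  have hinv : ∀ j ℓ, j ≠ ℓ → (g (a j)).1 ℓ = (g (b j)).1 ℓ := fun j ℓ hjℓ =>
    (hchange ℓ _ _ (hab2 j)).2 fun hℓ => hjℓ <| Fin.castLE_injective hm <|
      hinj ((hblock _).1.eq_of_mem (hblock _).1 (hab j) hℓ)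
  have hφ : ∀ x y, ({x, y} : Finset I) ∈ level H 2 → g x ≠ g y →
      ∃ ℓ, ({x, y} : Finset I) ∈ B (Fin.castLE hm ℓ) := fun x y hxy hne =>
    let ⟨ℓ, hℓ⟩ := Function.ne_iff.1 fun h => hne (Subtype.ext h)
    ⟨ℓ, not_not.1 (mt (hchange ℓ x y hxy).2 hℓ)⟩
  have hconn : (SimpleGraph.fromEdgeSet (Set.range fun ℓ => s(g (a ℓ), g (b ℓ)))).Connected := by
    refine (SimpleGraph.connected_iff_exists_forall_reachable _).2 ⟨g i₀, fun v => ?_⟩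
    obtain ⟨i, rfl⟩ := Set.rangeFactorization_surjective v
    exact OneConnected.reachable_fromEdgeSet hsc.1 hH (fun ℓ => hblock _) hab hφ i₀ i
  rw [← Nat.card_coe_set_eq, SimpleGraph.nat_card_eq_of_separating (f := fun ℓ v => v.1 ℓ)
    hsep hinv hconn, Nat.card_eq_fintype_card, Fintype.card_fin]

/-- For every `0 ≤ m ≤ n`, the image `Δ_m` of `Φ_m` has exactly
`m + 1` elements. -/
theorem card_image_PhiM
    {I : Type*} [Fintype I] [DecidableEq I] (H : Set (Finset I))
    (hH : IsCSS H) (hsc : SimplyConnected H)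
    (D : NodalDatum H) (n : ℕ) (B : Fin n → Set (Finset I))
    (hblock : ∀ ℓ : Fin n, IsSepBlock D (B ℓ)) (hinj : Function.Injective B)
    (hsurj : ∀ C : Set (Finset I), IsSepBlock D C → ∃ ℓ : Fin n, C = B ℓ)
    (i₀ : I) :
    ∀ (m : ℕ) (hm : m ≤ n), (Set.range (PhiM H i₀ B m hm)).ncard = m + 1 :=
  card_image_PhiM_general H hH hsc D n B hblock hinj i₀
end
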